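/- For every c > 1 and every ψ₁, ψ₂ with arcsin(1/c) ≤ ψ₁ < ψ₂ ≤ π − arcsin(1/c), one has ∫_{ψ₁}^{ψ₂} (1 − R⁻(c·sin ψ)²)⁻¹ dψ > ∫_{ψ₁}^{ψ₂} (R⁺(c·sin ψ)² − 1)⁻¹ dψ. (This rests on the pointwise inequality 1 − R⁻(x)² < R⁺(x)² − 1 for all x > 1.) -/

import Mathlib

/-!
Write `φ t = t - log t`, so that `K R = exp ((φ (R²) - 1) / 2)`. Then `r = R⁻(x)` and `s = R⁺(x)`
satisfy `φ (r²) = φ (s²)`. With `t = 1 - r²`, the series of `log (1 + t) - log (1 - t)` starts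
with `2 t`, so `φ (1 + t) < φ (1 - t) = φ (s²)`, and since `φ` increases on `[1, ∞)` we get
`s² > 1 + t`: this is the pointwise inequality `1 - r² < s² - 1`.

Integrating it needs both integrands to be integrable (otherwise the interval integrals are `0`).
Both are nonnegative and monotone in `x = c sin ψ`, and `(1 - R⁻(x)²)⁻¹ ≤ 1 + (log x)^(-1/2)`.
By concavity of `sin`, `log (c sin ψ)` grows at least linearly in the distance from `ψ` to the
endpoints `arcsin (1/c)` and `π - arcsin (1/c)`, so the integrands are dominated by integrable
inverse square root singularities.
-/

open Real

noncomputable def K (R : ℝ) : ℝ := Real.exp ((R ^ 2 - 1) / 2) / R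

open Set MeasureTheory

lemma sub_log_strictMonoOn : StrictMonoOn (fun t : ℝ => t - log t) (Ici 1) := by
  intro s hs t ht hst
  have hs0 : 0 < s := zero_lt_one.trans_le hs
  have ht0 : 0 < t := hs0.trans hst
  have hlog : log (t / s) < t / s - 1 :=
    log_lt_sub_one_of_pos (div_pos ht0 hs0) (ne_of_gt ((one_lt_div hs0).2 hst))
  have hdiv : t / s - 1 ≤ t - s := by
    rw [div_sub_one hs0.ne', div_le_iff₀ hs0]
    nlinarith [mem_Ici.1 hs]
  rw [log_div ht0.ne' hs0.ne'] at hlog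
  simp only
  linarith

lemma sub_log_strictAntiOn : StrictAntiOn (fun t : ℝ => t - log t) (Ioc 0 1) := by
  intro s hs t ht hst
  have ht0 : 0 < t := hs.1.trans hst
  have hlog : log (s / t) < s / t - 1 :=
    log_lt_sub_one_of_pos (div_pos hs.1 ht0) (ne_of_lt ((div_lt_one ht0).2 hst))
  have hdiv : s / t - 1 ≤ s - t := by
    rw [div_sub_one ht0.ne', div_le_iff₀ ht0]
    nlinarith [ht.2]
  rw [log_div hs.1.ne' ht0.ne'] at hlog
  simp only
  linarith

lemma two_mul_lt_log_sub_log {t : ℝ} (ht₀ : 0 < t) (ht₁ : t < 1) :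
    2 * t < log (1 + t) - log (1 - t) := by
  have hsum := hasSum_log_sub_log_of_abs_lt_one (abs_lt.2 ⟨by linarith, ht₁⟩)
  have hle := sum_le_hasSum (Finset.range 2) (fun k _ => by positivity) hsum
  norm_num [Finset.sum_range_succ] at hle
  nlinarith [pow_pos ht₀ 3]

lemma K_eq_exp {R : ℝ} (hR : 0 < R) : K R = exp ((R ^ 2 - log (R ^ 2) - 1) / 2) := by
  rw [K, log_pow, show ((R ^ 2 - ((2 : ℕ) : ℝ) * log R - 1) / 2) = (R ^ 2 - 1) / 2 - log R by
    push_cast; ring, exp_sub, exp_log hR]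

lemma K_strictAntiOn : StrictAntiOn K (Ioc 0 1) := by
  intro r hr s hs hrs
  rw [K_eq_exp hr.1, K_eq_exp hs.1, exp_lt_exp]
  have := sub_log_strictAntiOn ⟨pow_pos hr.1 2, pow_le_one₀ hr.1.le hr.2⟩
    ⟨pow_pos hs.1 2, pow_le_one₀ hs.1.le hs.2⟩ (pow_lt_pow_left₀ hrs hr.1.le two_ne_zero)
  simp only at this
  linarith

lemma K_strictMonoOn : StrictMonoOn K (Ici 1) := by
  intro r hr s hs hrs
  have hr0 : 0 < r := zero_lt_one.trans_le hr
  rw [K_eq_exp hr0, K_eq_exp (hr0.trans hrs), exp_lt_exp]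
  have := sub_log_strictMonoOn (one_le_pow₀ hr : 1 ≤ r ^ 2) (one_le_pow₀ hs : 1 ≤ s ^ 2)
    (pow_lt_pow_left₀ hrs hr0.le two_ne_zero)
  simp only at this
  linarith

lemma one_sub_sq_lt_sq_sub_one_of_K_eq {r s : ℝ} (hr₀ : 0 < r) (hr₁ : r < 1) (hs : 1 < s)
    (hK : K r = K s) : 1 - r ^ 2 < s ^ 2 - 1 := by
  set t := 1 - r ^ 2
  have ht₀ : 0 < t := by nlinarith
  have hφ : r ^ 2 - log (r ^ 2) = s ^ 2 - log (s ^ 2) := by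
    rw [K_eq_exp hr₀, K_eq_exp (zero_lt_one.trans hs), exp_eq_exp] at hK
    linarith
  have hlt : (1 + t) - log (1 + t) < s ^ 2 - log (s ^ 2) := by
    rw [← hφ, show r ^ 2 = 1 - t by ring]
    linarith [two_mul_lt_log_sub_log ht₀ (by nlinarith : t < 1)]
  have := (sub_log_strictMonoOn.lt_iff_lt (by simp [ht₀.le] : 1 + t ∈ Ici 1)
    (one_le_pow₀ hs.le : 1 ≤ s ^ 2)).1 hlt
  linarith

lemma inv_one_sub_sq_le_one_add_log_K_rpow {r : ℝ} (hr₀ : 0 < r) (hr₁ : r < 1) :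
    (1 - r ^ 2)⁻¹ ≤ 1 + log (K r) ^ (-(1 / 2) : ℝ) := by
  set u := 1 - r ^ 2
  have hu : 0 < u := by nlinarith
  have hr2 : 0 < r ^ 2 := by positivity
  have hlogK : log (K r) = (r ^ 2 - log (r ^ 2) - 1) / 2 := by rw [K_eq_exp hr₀, log_exp]
  have hpos : 0 < log (K r) := by
    have := sub_log_strictAntiOn ⟨hr2, by nlinarith⟩ ⟨one_pos, le_rfl⟩ (by nlinarith : r ^ 2 < 1)
    simp only [log_one, sub_zero] at this
    linarith
  have hle : log (K r) ≤ (u / r) ^ 2 := by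
    have hlog := one_sub_inv_le_log_of_pos hr2
    have : r ^ 2 - (1 - (r ^ 2)⁻¹) - 1 = (u / r) ^ 2 := by field_simp; ring
    linarith [sq_nonneg (u / r)]
  have hrpow : r / u ≤ log (K r) ^ (-(1 / 2) : ℝ) := by
    calc r / u = ((u / r) ^ 2) ^ (-(1 / 2) : ℝ) := by
          rw [rpow_neg (sq_nonneg _), ← sqrt_eq_rpow, sqrt_sq (div_pos hu hr₀).le, inv_div]
      _ ≤ log (K r) ^ (-(1 / 2) : ℝ) := rpow_le_rpow_of_nonpos hpos hle (by norm_num)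
  calc u⁻¹ = 1 + r ^ 2 / u := by field_simp; ring
    _ ≤ 1 + r / u := by gcongr; nlinarith
    _ ≤ 1 + log (K r) ^ (-(1 / 2) : ℝ) := by linarith

lemma sub_mul_le_mul_sin_sub_one {c ψ : ℝ} (hc : 1 < c) (h₁ : arcsin (1 / c) ≤ ψ)
    (h₂ : ψ ≤ π / 2) :
    (c - 1) * (ψ - arcsin (1 / c)) ≤ (π / 2 - arcsin (1 / c)) * (c * sin ψ - 1) := by
  set a := arcsin (1 / c)
  have hc₀ : 0 < c := one_pos.trans hc
  have hsin_a : sin a = 1 / c :=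
    sin_arcsin (by linarith [one_div_pos.2 hc₀]) ((div_le_one hc₀).2 hc.le)
  have ha₀ : 0 ≤ a := arcsin_nonneg.2 (one_div_pos.2 hc₀).le
  rcases h₁.eq_or_lt with rfl | h₁
  · simp [hsin_a, hc₀.ne']
  rcases h₂.eq_or_lt with rfl | h₂
  · simp [sin_pi_div_two, mul_comm]
  have hsecant := strictConcaveOn_sin_Icc.concaveOn.neg.secant_mono_aux1
    ⟨ha₀, by linarith [pi_pos]⟩ ⟨by linarith [pi_pos], by linarith [pi_pos]⟩ h₁ h₂
  simp only [Pi.neg_apply, hsin_a, sin_pi_div_two] at hsecant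
  have := mul_le_mul_of_nonneg_left hsecant hc₀.le
  field_simp at this
  nlinarith

lemma sub_mul_min_le_mul_sin_sub_one {c ψ : ℝ} (hc : 1 < c) (h₁ : arcsin (1 / c) ≤ ψ)
    (h₂ : ψ ≤ π - arcsin (1 / c)) :
    (c - 1) * min (ψ - arcsin (1 / c)) (π - arcsin (1 / c) - ψ) ≤
      (π / 2 - arcsin (1 / c)) * (c * sin ψ - 1) := by
  have hc₁ : 0 ≤ c - 1 := by linarith
  rcases le_total ψ (π / 2) with h | h
  · exact (mul_le_mul_of_nonneg_left (min_le_left _ _) hc₁).trans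
      (sub_mul_le_mul_sin_sub_one hc h₁ h)
  · have := sub_mul_le_mul_sin_sub_one hc (ψ := π - ψ) (by linarith) (by linarith)
    rw [sin_pi_sub, sub_right_comm] at this
    exact (mul_le_mul_of_nonneg_left (min_le_right _ _) hc₁).trans this

lemma arcsin_one_div_lt_pi_div_two {c : ℝ} (hc : 1 < c) : arcsin (1 / c) < π / 2 :=
  arcsin_lt_pi_div_two.2 ((div_lt_one (one_pos.trans hc)).2 hc)

lemma one_lt_mul_sin {c ψ : ℝ} (hc : 1 < c) (h₁ : arcsin (1 / c) < ψ)
    (h₂ : ψ < π - arcsin (1 / c)) : 1 < c * sin ψ := by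
  have hmin : 0 < (c - 1) * min (ψ - arcsin (1 / c)) (π - arcsin (1 / c) - ψ) :=
    mul_pos (by linarith) (lt_min (by linarith) (by linarith))
  have := hmin.trans_le (sub_mul_min_le_mul_sin_sub_one hc h₁.le h₂.le)
  have := arcsin_one_div_lt_pi_div_two hc
  nlinarith

lemma mul_min_le_log_mul_sin {c ψ : ℝ} (hc : 1 < c) (h₁ : arcsin (1 / c) < ψ)
    (h₂ : ψ < π - arcsin (1 / c)) :
    (c - 1) / (c * (π / 2 - arcsin (1 / c))) *
      min (ψ - arcsin (1 / c)) (π - arcsin (1 / c) - ψ) ≤ log (c * sin ψ) := by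
  have hy := one_lt_mul_sin hc h₁ h₂
  have hsin := sub_mul_min_le_mul_sin_sub_one hc h₁.le h₂.le
  have hL := arcsin_one_div_lt_pi_div_two hc
  set a := arcsin (1 / c)
  have hc₀ : 0 < c := one_pos.trans hc
  have hyc : c * sin ψ ≤ c := mul_le_of_le_one_right hc₀.le (sin_le_one ψ)
  calc (c - 1) / (c * (π / 2 - a)) * min (ψ - a) (π - a - ψ)
      ≤ (c * sin ψ - 1) / c := by
        rw [div_mul_eq_mul_div, div_le_div_iff₀ (mul_pos hc₀ (by linarith)) hc₀]
        nlinarith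
    _ ≤ (c * sin ψ - 1) / (c * sin ψ) := div_le_div_of_nonneg_left (by linarith) (by linarith) hyc
    _ = 1 - (c * sin ψ)⁻¹ := by rw [sub_div, div_self (by linarith), one_div]
    _ ≤ log (c * sin ψ) := one_sub_inv_le_log_of_pos (by linarith)

lemma min_rpow_le_rpow_add_rpow {s t : ℝ} (hs : 0 ≤ s) (ht : 0 ≤ t) (p : ℝ) :
    min s t ^ p ≤ s ^ p + t ^ p := by
  rcases min_choice s t with h | h <;> rw [h]
  · linarith [rpow_nonneg ht p]
  · linarith [rpow_nonneg hs p]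

lemma AntitoneOn.aemeasurable_comp {α : Type*} [MeasurableSpace α] {μ : Measure α}
    {f : ℝ → ℝ} {g : α → ℝ} {s : Set α} {t : Set ℝ} (hf : AntitoneOn f t) (hg : Measurable g)
    (hs : MeasurableSet s) (hst : MapsTo g s t) : AEMeasurable (f ∘ g) (μ.restrict s) := by
  have hf' : Antitone fun x : t => f x := fun x y hxy => hf x.2 y.2 hxy
  exact aemeasurable_restrict_of_measurable_subtype hs (hf'.measurable.comp
    (f := fun x : s => (⟨g x, hst x.2⟩ : t)) (hg.comp measurable_subtype_coe).subtype_mk)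

lemma intervalIntegrable_comp_mul_sin {F : ℝ → ℝ} {c ψ₁ ψ₂ : ℝ} (hc : 1 < c)
    (hF : AntitoneOn F (Ioi 1)) (hF₀ : ∀ x, 1 < x → 0 ≤ F x)
    (hF_le : ∀ x, 1 < x → F x ≤ 1 + log x ^ (-(1 / 2) : ℝ))
    (h₁ : arcsin (1 / c) ≤ ψ₁) (h₁₂ : ψ₁ ≤ ψ₂) (h₂ : ψ₂ ≤ π - arcsin (1 / c)) :
    IntervalIntegrable (fun ψ => F (c * sin ψ)) volume ψ₁ ψ₂ := by
  set a := arcsin (1 / c)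
  set b := π - a
  set κ := (c - 1) / (c * (π / 2 - a))
  have hκ : 0 < κ := div_pos (by linarith)
    (mul_pos (one_pos.trans hc) (by linarith [arcsin_one_div_lt_pi_div_two hc]))
  set G : ℝ → ℝ := fun ψ => 1 + κ ^ (-(1 / 2) : ℝ) *
    ((ψ - a) ^ (-(1 / 2) : ℝ) + (b - ψ) ^ (-(1 / 2) : ℝ))
  have hG : IntervalIntegrable G volume ψ₁ ψ₂ := by
    have hrpow (u v : ℝ) : IntervalIntegrable (fun x : ℝ => x ^ (-(1 / 2) : ℝ)) volume u v :=
      intervalIntegral.intervalIntegrable_rpow' (by norm_num)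
    refine intervalIntegrable_const.add (IntervalIntegrable.const_mul (.add ?_ ?_) _)
    · simpa using (hrpow (ψ₁ - a) (ψ₂ - a)).comp_sub_right a
    · simpa using (hrpow (b - ψ₁) (b - ψ₂)).comp_sub_left b
  have hdom : ∀ ψ ∈ Ioo ψ₁ ψ₂, ‖F (c * sin ψ)‖ ≤ G ψ := by
    intro ψ hψ
    have ha : a < ψ := h₁.trans_lt hψ.1
    have hb : ψ < b := hψ.2.trans_le h₂
    have hy := one_lt_mul_sin hc ha hb
    have hmin : 0 < min (ψ - a) (b - ψ) := lt_min (by linarith) (by linarith)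
    rw [Real.norm_of_nonneg (hF₀ _ hy)]
    calc F (c * sin ψ) ≤ 1 + log (c * sin ψ) ^ (-(1 / 2) : ℝ) := hF_le _ hy
      _ ≤ 1 + (κ * min (ψ - a) (b - ψ)) ^ (-(1 / 2) : ℝ) := by
          gcongr 1 + ?_
          exact rpow_le_rpow_of_nonpos (by positivity) (mul_min_le_log_mul_sin hc ha hb)
            (by norm_num)
      _ ≤ G ψ := by
          rw [mul_rpow hκ.le hmin.le]
          simp only [G]
          gcongr 1 + κ ^ _ * ?_
          exact min_rpow_le_rpow_add_rpow (by linarith) (by linarith) _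
  have hmeas : AEStronglyMeasurable (fun ψ => F (c * sin ψ)) (volume.restrict (Ioo ψ₁ ψ₂)) :=
    (hF.aemeasurable_comp (by fun_prop) measurableSet_Ioo fun ψ hψ =>
      one_lt_mul_sin hc (h₁.trans_lt hψ.1) (hψ.2.trans_le h₂)).aestronglyMeasurable
  rw [intervalIntegrable_iff_integrableOn_Ioo_of_le h₁₂] at hG ⊢
  exact hG.mono' hmeas ((ae_restrict_iff' measurableSet_Ioo).2 (ae_of_all _ hdom))

lemma antitoneOn_inv_one_sub_sq {Rm : ℝ → ℝ}
    (hRm : ∀ x : ℝ, 1 < x → 0 < Rm x ∧ Rm x < 1 ∧ K (Rm x) = x) :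
    AntitoneOn (fun x => (1 - Rm x ^ 2)⁻¹) (Ioi 1) := by
  intro x hx y hy hxy
  obtain ⟨hx₀, hx₁, hKx⟩ := hRm x hx
  obtain ⟨hy₀, hy₁, hKy⟩ := hRm y hy
  have : Rm y ≤ Rm x :=
    (K_strictAntiOn.le_iff_ge ⟨hx₀, hx₁.le⟩ ⟨hy₀, hy₁.le⟩).1 (by rwa [hKx, hKy])
  exact inv_anti₀ (by nlinarith) (by nlinarith)

lemma antitoneOn_inv_sq_sub_one {Rp : ℝ → ℝ}
    (hRp : ∀ x : ℝ, 1 < x → 1 < Rp x ∧ K (Rp x) = x) :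
    AntitoneOn (fun x => (Rp x ^ 2 - 1)⁻¹) (Ioi 1) := by
  intro x hx y hy hxy
  obtain ⟨hx₁, hKx⟩ := hRp x hx
  obtain ⟨hy₁, hKy⟩ := hRp y hy
  have : Rp x ≤ Rp y :=
    (K_strictMonoOn.le_iff_le (mem_Ici.2 hx₁.le) (mem_Ici.2 hy₁.le)).1 (by rwa [hKx, hKy])
  exact inv_anti₀ (by nlinarith) (by nlinarith)

theorem stmt_1 (Rm Rp : ℝ → ℝ)
    (hRm : ∀ x : ℝ, 1 < x → 0 < Rm x ∧ Rm x < 1 ∧ K (Rm x) = x)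
    (hRp : ∀ x : ℝ, 1 < x → 1 < Rp x ∧ K (Rp x) = x)
    (c ψ₁ ψ₂ : ℝ) (hc : 1 < c)
    (h₁ : Real.arcsin (1 / c) ≤ ψ₁) (h₁₂ : ψ₁ < ψ₂)
    (h₂ : ψ₂ ≤ π - Real.arcsin (1 / c)) :
    (∫ ψ in ψ₁..ψ₂, (1 - (Rm (c * Real.sin ψ)) ^ 2)⁻¹) >
      ∫ ψ in ψ₁..ψ₂, ((Rp (c * Real.sin ψ)) ^ 2 - 1)⁻¹ := by
  have hlt : ∀ x, 1 < x → (Rp x ^ 2 - 1)⁻¹ < (1 - Rm x ^ 2)⁻¹ := fun x hx => by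
    obtain ⟨hm₀, hm₁, hKm⟩ := hRm x hx
    obtain ⟨hp₁, hKp⟩ := hRp x hx
    exact inv_strictAnti₀ (by nlinarith)
      (one_sub_sq_lt_sq_sub_one_of_K_eq hm₀ hm₁ hp₁ (hKm.trans hKp.symm))
  have hle₁ : ∀ x, 1 < x → (1 - Rm x ^ 2)⁻¹ ≤ 1 + log x ^ (-(1 / 2) : ℝ) := fun x hx => by
    obtain ⟨hm₀, hm₁, hKm⟩ := hRm x hx
    simpa [hKm] using inv_one_sub_sq_le_one_add_log_K_rpow hm₀ hm₁
  have hpos₂ : ∀ x, 1 < x → 0 ≤ (Rp x ^ 2 - 1)⁻¹ := fun x hx => by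
    have := (hRp x hx).1
    exact inv_nonneg.2 (by nlinarith)
  have hint₁ := intervalIntegrable_comp_mul_sin hc (antitoneOn_inv_one_sub_sq hRm)
    (fun x hx => (hpos₂ x hx).trans (hlt x hx).le) hle₁ h₁ h₁₂.le h₂
  have hint₂ := intervalIntegrable_comp_mul_sin hc (antitoneOn_inv_sq_sub_one hRp) hpos₂
    (fun x hx => (hlt x hx).le.trans (hle₁ x hx)) h₁ h₁₂.le h₂
  rw [gt_iff_lt, ← sub_pos, ← intervalIntegral.integral_sub hint₁ hint₂]
  exact intervalIntegral.intervalIntegral_pos_of_pos_on (hint₁.sub hint₂)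
    (fun ψ hψ => sub_pos.2 (hlt _ (one_lt_mul_sin hc (h₁.trans_lt hψ.1) (hψ.2.trans_le h₂))))
    h₁₂
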